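/- In the degree-reduction graph H constructed from G and k with budget b = k(k-1)/2: if G has no k-clique, then for every A* ⊆ E with |A*| ≤ b, fewer than k nodes of (V', E' ∪ A*) have degree strictly greater than deg(v_e). -/

import Mathlib

/-- Vertex type of the degree-reduction graph `H`: evader `v_e`, original nodes of `V`,
pendant nodes `x_{i,j}` (one for each unit of degree of each original node), and
pendant nodes `z_1, ..., z_{k-2}`. -/
abbrev HVert {V : Type*} [Fintype V] (G : SimpleGraph V) [DecidableRel G.Adj] (k : ℕ) :=
  Unit ⊕ V ⊕ (Σ v : V, Fin (G.degree v)) ⊕ Fin (k - 2)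

/-- The degree-reduction graph `H`: `v_e` is adjacent to every original node and to the
`k-2` pendants `z_i`; each original node `v` is adjacent to its `|N_G(v)|` pendants
`x_{v,j}`; and the edges among original nodes are the complement of the edges of `G`. -/
def Hgraph {V : Type*} [Fintype V] (G : SimpleGraph V) [DecidableRel G.Adj] (k : ℕ) :
    SimpleGraph (HVert G k) :=
  SimpleGraph.fromRel (fun a b =>
    match a, b with
    | Sum.inl _, Sum.inr (Sum.inl _) => True
    | Sum.inr (Sum.inl v), Sum.inr (Sum.inr (Sum.inl ⟨w, _⟩)) => v = w
    | Sum.inl _, Sum.inr (Sum.inr (Sum.inr _)) => True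
    | Sum.inr (Sum.inl v), Sum.inr (Sum.inl w) => ¬ G.Adj v w
    | _, _ => False)


/-- The embedding of the original vertex set `V` into the vertices of `H`. -/
def origEmb {V : Type*} [Fintype V] (G : SimpleGraph V) [DecidableRel G.Adj] (k : ℕ) :
    V ↪ HVert G k :=
  ⟨fun v => Sum.inr (Sum.inl v), fun a b h => by simpa using h⟩

/-! In `H ∪ A*` the evader `v_e` has degree `n + k - 2`, an original node `v` has degree
`1 + (n - 1 - deg_G v) + deg_G v + deg_{A*} v = n + deg_{A*} v`, and pendants have degree `1`.
So only original nodes with at least `k - 1` incident added edges exceed `v_e`. If `k` such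
nodes existed, their degree sum `k(k-1)` in `A*` would already exhaust `2|A*| ≤ k(k-1)`: every
added edge would lie among them, and they would form a `k`-clique of `A* ≤ G`. -/

open Finset

namespace SimpleGraph

variable {V : Type*} {A : SimpleGraph V}

theorem ncard_neighborSet (v : V) [Fintype (A.neighborSet v)] :
    (A.neighborSet v).ncard = A.degree v := by
  rw [Set.ncard_eq_toFinset_card', degree, neighborFinset]

theorem ncard_edgeSet [Fintype A.edgeSet] : A.edgeSet.ncard = #A.edgeFinset :=
  Set.ncard_eq_toFinset_card' _

variable [Fintype V]

theorem ncard_neighborSet_compl_sup_of_le {G : SimpleGraph V} [DecidableRel G.Adj]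
    [DecidableRel A.Adj] (hA : A ≤ G) (v : V) :
    ((Gᶜ ⊔ A).neighborSet v).ncard = Fintype.card V - 1 - G.degree v + A.degree v := by
  classical
  have hdisj : Disjoint (Gᶜ.neighborSet v) (A.neighborSet v) :=
    disjoint_neighborSet.2 (disjoint_compl_left.mono_right hA) v
  rw [neighborSet_sup, Set.ncard_union_eq hdisj, ncard_neighborSet, ncard_neighborSet,
    degree_compl]

theorem isClique_of_le_degree [DecidableRel A.Adj] {s : Finset V} {k : ℕ} (hs : #s = k)
    (hdeg : ∀ v ∈ s, k - 1 ≤ A.degree v) (hE : 2 * #A.edgeFinset ≤ k * (k - 1)) :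
    A.IsClique (s : Set V) := by
  classical
  have hsum : ∑ v, A.degree v ≤ ∑ v ∈ s, A.degree v := calc
    ∑ v, A.degree v = 2 * #A.edgeFinset := A.sum_degrees_eq_twice_card_edges
    _ ≤ k * (k - 1) := hE
    _ = ∑ _v ∈ s, (k - 1) := by rw [sum_const, hs, smul_eq_mul]
    _ ≤ ∑ v ∈ s, A.degree v := sum_le_sum hdeg
  have hout : ∀ w ∉ s, A.degree w = 0 := by
    have hsplit := sum_add_sum_compl s fun v => A.degree v
    have hzero : ∑ w ∈ sᶜ, A.degree w = 0 := by omega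
    simpa [sum_eq_zero_iff] using hzero
  have hnbr : ∀ v ∈ s, A.neighborFinset v = s.erase v := by
    intro v hv
    refine eq_of_subset_of_card_le (fun w hw => ?_) ?_
    · rw [mem_neighborFinset] at hw
      refine mem_erase.2 ⟨hw.ne.symm, ?_⟩
      by_contra hws
      exact (A.degree_eq_zero_iff_notMem_support w).1 (hout w hws)
        (A.mem_support.2 ⟨v, hw.symm⟩)
    · rw [card_erase_of_mem hv, hs]
      exact hdeg v hv
  intro v hv w hw hvw
  have hw' : w ∈ A.neighborFinset v := by
    rw [hnbr v hv]
    exact mem_erase.2 ⟨Ne.symm hvw, hw⟩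
  exact (A.mem_neighborFinset v w).1 hw'

theorem card_filter_le_degree_lt_of_cliqueFree [DecidableRel A.Adj] {k : ℕ}
    (hA : A.CliqueFree k) (hE : #A.edgeFinset ≤ k * (k - 1) / 2) :
    #{v | k - 1 ≤ A.degree v} < k := by
  by_contra! hk
  obtain ⟨s, hsub, hs⟩ := exists_subset_card_eq hk
  refine hA s ⟨isClique_of_le_degree hs (fun v hv => (mem_filter.1 (hsub hv)).2) ?_, hs⟩
  have := Nat.mul_div_le (k * (k - 1)) 2
  omega

end SimpleGraph

open SimpleGraph

section augmented

variable {V : Type*} [Fintype V] (G : SimpleGraph V) [DecidableRel G.Adj] (k : ℕ)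
  (A : SimpleGraph V)

abbrev augmentedHgraph : SimpleGraph (HVert G k) := Hgraph G k ⊔ A.map (origEmb G k)

@[simp] theorem origEmb_apply (v : V) : origEmb G k v = Sum.inr (Sum.inl v) := rfl

theorem augmentedHgraph_neighborSet_evader :
    (augmentedHgraph G k A).neighborSet (Sum.inl ()) =
      Set.range (origEmb G k) ∪
        Set.range fun i : Fin (k - 2) => Sum.inr (Sum.inr (Sum.inr i)) := by
  ext (_ | v | ⟨w, j⟩ | i) <;> simp [Hgraph]

theorem augmentedHgraph_neighborSet_orig (v : V) :
    (augmentedHgraph G k A).neighborSet (origEmb G k v) =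
      insert (Sum.inl ()) (origEmb G k '' (Gᶜ ⊔ A).neighborSet v ∪
        Set.range fun j : Fin (G.degree v) => Sum.inr (Sum.inr (Sum.inl ⟨v, j⟩))) := by
  ext (_ | w | ⟨w, j⟩ | i)
  · simp [Hgraph]
  · simp [Hgraph, G.adj_comm w v]
  · obtain rfl | hvw := eq_or_ne v w
    · simp [Hgraph]
    · simp [Hgraph, hvw]
  · simp [Hgraph]

theorem augmentedHgraph_neighborSet_origPendant (v : V) (j : Fin (G.degree v)) :
    (augmentedHgraph G k A).neighborSet (Sum.inr (Sum.inr (Sum.inl ⟨v, j⟩))) =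
      {origEmb G k v} := by
  ext (_ | w | ⟨w, j'⟩ | i) <;> simp [Hgraph]

theorem augmentedHgraph_neighborSet_evaderPendant (i : Fin (k - 2)) :
    (augmentedHgraph G k A).neighborSet (Sum.inr (Sum.inr (Sum.inr i))) = {Sum.inl ()} := by
  ext (_ | w | ⟨w, j⟩ | i') <;> simp [Hgraph]

theorem ncard_augmentedHgraph_neighborSet_evader :
    ((augmentedHgraph G k A).neighborSet (Sum.inl ())).ncard = Fintype.card V + (k - 2) := by
  have hdisj : Disjoint (Set.range (origEmb G k))
      (Set.range fun i : Fin (k - 2) => (Sum.inr (Sum.inr (Sum.inr i)) : HVert G k)) := by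
    simp [Set.disjoint_left]
  rw [augmentedHgraph_neighborSet_evader, Set.ncard_union_eq hdisj,
    Set.ncard_range_of_injective (origEmb G k).injective,
    Set.ncard_range_of_injective fun i j h => by simpa using h]
  simp

theorem ncard_augmentedHgraph_neighborSet_orig [DecidableRel A.Adj] (hA : A ≤ G) (v : V) :
    ((augmentedHgraph G k A).neighborSet (origEmb G k v)).ncard =
      Fintype.card V + A.degree v := by
  have hdisj : Disjoint (origEmb G k '' (Gᶜ ⊔ A).neighborSet v)
      (Set.range fun j : Fin (G.degree v) =>
        (Sum.inr (Sum.inr (Sum.inl ⟨v, j⟩)) : HVert G k)) := by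
    simp [Set.disjoint_left]
  rw [augmentedHgraph_neighborSet_orig, Set.ncard_insert_of_notMem (by simp),
    Set.ncard_union_eq hdisj, Set.ncard_image_of_injective _ (origEmb G k).injective,
    Set.ncard_range_of_injective fun i j h => by simpa using h,
    ncard_neighborSet_compl_sup_of_le hA]
  have := G.degree_lt_card_verts v
  simp only [Nat.card_eq_fintype_card, Fintype.card_fin]
  omega

theorem setOf_degree_gt_evader_subset_image_orig [DecidableRel A.Adj] (hA : A ≤ G) :
    {x | ((augmentedHgraph G k A).neighborSet (Sum.inl ())).ncard <
        ((augmentedHgraph G k A).neighborSet x).ncard} ⊆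
      origEmb G k '' {v | k - 1 ≤ A.degree v} := by
  rintro (_ | v | ⟨v, j⟩ | i) hx <;>
    rw [Set.mem_ofPred_eq, ncard_augmentedHgraph_neighborSet_evader] at hx
  · exact absurd hx (lt_irrefl _)
  · have hv := ncard_augmentedHgraph_neighborSet_orig G k A hA v
    rw [origEmb_apply] at hv
    exact ⟨v, by rw [Set.mem_ofPred_eq]; omega, rfl⟩
  · rw [augmentedHgraph_neighborSet_origPendant, Set.ncard_singleton] at hx
    have := Fintype.card_pos_iff.2 ⟨v⟩
    omega
  · rw [augmentedHgraph_neighborSet_evaderPendant, Set.ncard_singleton] at hx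
    have := i.pos
    omega

end augmented

theorem no_clique_implies_few_exceed_general {V : Type*} [Fintype V]
    (G : SimpleGraph V) [DecidableRel G.Adj] (k : ℕ)
    (hnoclique : ¬ ∃ s : Finset V, s.card = k ∧ G.IsClique ↑s) :
    ∀ A : SimpleGraph V, A ≤ G → A.edgeSet.ncard ≤ k * (k - 1) / 2 →
      {x : HVert G k |
        (((Hgraph G k) ⊔ A.map (origEmb G k)).neighborSet (Sum.inl ())).ncard <
        (((Hgraph G k) ⊔ A.map (origEmb G k)).neighborSet x).ncard}.ncard < k := by
  intro A hA hE
  classical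
  have hG : G.CliqueFree k := fun s hs => hnoclique ⟨s, hs.card_eq, hs.isClique⟩
  calc _ ≤ (origEmb G k '' {v | k - 1 ≤ A.degree v}).ncard :=
        Set.ncard_le_ncard (setOf_degree_gt_evader_subset_image_orig G k A hA)
    _ = #{v | k - 1 ≤ A.degree v} := by
        rw [Set.ncard_image_of_injective _ (origEmb G k).injective, Set.ncard_eq_toFinset_card',
          Set.toFinset_ofPred]
    _ < k := card_filter_le_degree_lt_of_cliqueFree (hG.anti hA) (by rwa [← ncard_edgeSet])

/-- If `G` has no `k`-clique, then for every set `A* ⊆ E(G)` of at most `k(k-1)/2`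
added edges, fewer than `k` nodes of the resulting graph `H ∪ A*` have degree strictly
greater than the degree of `v_e`. -/
theorem no_clique_implies_few_exceed {V : Type*} [Fintype V] [DecidableEq V]
    (G : SimpleGraph V) [DecidableRel G.Adj] (k : ℕ) (hk : 2 ≤ k)
    (hnoclique : ¬ ∃ s : Finset V, s.card = k ∧ G.IsClique ↑s) :
    ∀ A : SimpleGraph V, A ≤ G → A.edgeSet.ncard ≤ k * (k - 1) / 2 →
      {x : HVert G k |
        (((Hgraph G k) ⊔ A.map (origEmb G k)).neighborSet (Sum.inl ())).ncard <
        (((Hgraph G k) ⊔ A.map (origEmb G k)).neighborSet x).ncard}.ncard < k :=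
  no_clique_implies_few_exceed_general G k hnoclique
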